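/- arXiv:math/0601353 — 4 statements merged into one kernel-verified Lean document; each statement's English description precedes it below -/
import Mathlib

section
/- Fix s ≠ 0 and let 𝔨 be 𝔨₁ or 𝔨₂. Suppose (γ,λ) ≠ (0,0) and A(φ,ψ) = c₀₀ φψ + c₁₀ φ'ψ + c₀₁ φψ' is a 𝔨-invariant bilinear differential operator from F_γ × F_λ to F_μ (smooth coefficients) whose first-order part is nonzero, i.e. (c₁₀, c₀₁) ≠ (0,0). Then μ = γ + λ + 1, c₀₀ = 0, and A is a nonzero constant multiple of the Poisson bracket {φ,ψ} = γ φψ' − λ φ'ψ. -/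
/-- The action of the vector field `X d/dx` on densities of weight `l`:
`L_X^l φ = X φ' + l X' φ`. -/
noncomputable def densL (l : ℝ) (X φ : ℝ → ℝ) : ℝ → ℝ :=
  fun x => X x * deriv φ x + l * deriv X x * φ x

/-- The Lie subalgebra 𝔨₁ ⊂ Vect(ℝ): the span of `1`, `sin(sx)`, `cos(sx)`. -/
def k1 (s : ℝ) : Set (ℝ → ℝ) :=
  {X | ∃ a b c : ℝ, X = fun x => a + b * Real.sin (s * x) + c * Real.cos (s * x)}

/-- The Lie subalgebra 𝔨₂ ⊂ Vect(ℝ): the span of `1`, `sinh(sx)`, `cosh(sx)`. -/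
def k2 (s : ℝ) : Set (ℝ → ℝ) :=
  {X | ∃ a b c : ℝ, X = fun x => a + b * Real.sinh (s * x) + c * Real.cosh (s * x)}

/-- If `(γ,λ) ≠ (0,0)` and `A(φ,ψ) = c₀₀ φψ + c₁₀ φ'ψ + c₀₁ φψ' : F_γ × F_λ → F_μ` is a
𝔨-invariant bilinear differential operator with nonzero first-order part, then
`μ = γ + λ + 1`, `c₀₀ = 0`, and `A` is a nonzero constant multiple of the Poisson bracket
`{φ,ψ} = γ φψ' − λ φ'ψ` (i.e. `c₁₀ = −rλ`, `c₀₁ = rγ` for some `r ≠ 0`). -/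
theorem stmt3 (s : ℝ) (hs : s ≠ 0) (K : Set (ℝ → ℝ)) (hK : K = k1 s ∨ K = k2 s)
    (γ lam μ : ℝ) (hγlam : ¬(γ = 0 ∧ lam = 0))
    (c00 c10 c01 : ℝ → ℝ)
    (hc00 : ContDiff ℝ (⊤ : ℕ∞) c00) (hc10 : ContDiff ℝ (⊤ : ℕ∞) c10) (hc01 : ContDiff ℝ (⊤ : ℕ∞) c01)
    (A : (ℝ → ℝ) → (ℝ → ℝ) → ℝ → ℝ)
    (hA : ∀ φ ψ : ℝ → ℝ, ∀ x : ℝ,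
      A φ ψ x = c00 x * φ x * ψ x + c10 x * deriv φ x * ψ x + c01 x * φ x * deriv ψ x)
    (hfirst : ∃ x : ℝ, c10 x ≠ 0 ∨ c01 x ≠ 0)
    (hinv : ∀ X ∈ K, ∀ φ ψ : ℝ → ℝ, ContDiff ℝ (⊤ : ℕ∞) φ → ContDiff ℝ (⊤ : ℕ∞) ψ → ∀ x : ℝ,
      densL μ X (A φ ψ) x = A (densL γ X φ) ψ x + A φ (densL lam X ψ) x) :
    μ = γ + lam + 1 ∧ (∀ x : ℝ, c00 x = 0) ∧
      ∃ r : ℝ, r ≠ 0 ∧ ∀ x : ℝ, c10 x = -(r * lam) ∧ c01 x = r * γ := by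
  have honeK : (fun _ : ℝ => (1:ℝ)) ∈ K := by
    rcases hK with h | h <;> subst h
    · exact ⟨1, 0, 0, by funext x; ring⟩
    · exact ⟨1, 0, 0, by funext x; ring⟩
  have dc00 : Differentiable ℝ c00 := hc00.differentiable (by simp)
  have dc10 : Differentiable ℝ c10 := hc10.differentiable (by simp)
  have dc01 : Differentiable ℝ c01 := hc01.differentiable (by simp)
  have hA11 : A (fun _ => 1) (fun _ => 1) = c00 := by
    funext x; rw [hA]; simp
  have hAid1 : A (fun x => x) (fun _ => 1) = fun x => c00 x * x + c10 x := by
    funext x; rw [hA]; simp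
  have hA1id : A (fun _ => 1) (fun x => x) = fun x => c00 x * x + c01 x := by
    funext x; rw [hA]; simp
  have hz : ∀ l : ℝ, densL l (fun _ => 1) (fun _ => 1) = fun _ => (0:ℝ) := by
    intro l; funext t; simp [densL]
  have hzid : ∀ l : ℝ, densL l (fun _ => 1) (fun x => x) = fun _ => (1:ℝ) := by
    intro l; funext t; simp [densL]
  -- coefficients are constant
  have hdc00 : ∀ x, deriv c00 x = 0 := by
    intro x
    have key := hinv _ honeK (fun _ => (1:ℝ)) (fun _ => (1:ℝ)) contDiff_const contDiff_const x
    rw [hA11, hz, hz, hA, hA] at key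
    simpa [densL] using key
  have hdc10 : ∀ x, deriv c10 x = 0 := by
    intro x
    have key := hinv _ honeK (fun x => x) (fun _ => (1:ℝ)) contDiff_id contDiff_const x
    rw [hAid1, hzid, hz, hA, hA] at key
    have hd : HasDerivAt (fun t => c00 t * t + c10 t)
        (deriv c00 x * x + c00 x * 1 + deriv c10 x) x :=
      (((dc00 x).hasDerivAt.mul (hasDerivAt_id x))).add (dc10 x).hasDerivAt
    simp [densL, hd.deriv, hdc00 x] at key
    linarith [key]
  have hdc01 : ∀ x, deriv c01 x = 0 := by
    intro x
    have key := hinv _ honeK (fun _ => (1:ℝ)) (fun x => x) contDiff_const contDiff_id x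
    rw [hA1id, hz, hzid, hA, hA] at key
    have hd : HasDerivAt (fun t => c00 t * t + c01 t)
        (deriv c00 x * x + c00 x * 1 + deriv c01 x) x :=
      (((dc00 x).hasDerivAt.mul (hasDerivAt_id x))).add (dc01 x).hasDerivAt
    simp [densL, hd.deriv, hdc00 x] at key
    linarith [key]
  have hc00c : ∀ x, c00 x = c00 0 := fun x => is_const_of_deriv_eq_zero dc00 hdc00 x 0
  have hc10c : ∀ x, c10 x = c10 0 := fun x => is_const_of_deriv_eq_zero dc10 hdc10 x 0
  have hc01c : ∀ x, c01 x = c01 0 := fun x => is_const_of_deriv_eq_zero dc01 hdc01 x 0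
  -- a good vector field
  obtain ⟨X, d1, d2, hXK, h1, h2, hX0, hd10, hd20, hd2⟩ :
      ∃ X d1 d2 : ℝ → ℝ, X ∈ K ∧ (∀ x, HasDerivAt X (d1 x) x) ∧
        (∀ x, HasDerivAt d1 (d2 x) x) ∧ X 0 = 0 ∧ d1 0 = s ∧ d2 0 = 0 ∧ d2 (1/s) ≠ 0 := by
    have hlin : ∀ x : ℝ, HasDerivAt (fun y => s * y) s x := fun x => by
      simpa using (hasDerivAt_id x).const_mul s
    rcases hK with h | h <;> subst h
    · refine ⟨fun x => Real.sin (s*x), fun x => Real.cos (s*x) * s,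
        fun x => -Real.sin (s*x) * s * s, ⟨0, 1, 0, by funext x; ring⟩,
        fun x => (hlin x).sin, fun x => ((hlin x).cos).mul_const s, by simp, by simp, by simp, ?_⟩
      have h1 : s * (1/s) = 1 := by field_simp
      show -Real.sin (s * (1/s)) * s * s ≠ 0
      rw [h1]
      have hsin : Real.sin 1 ≠ 0 := by
        have := Real.sin_pos_of_pos_of_lt_pi (x := 1) one_pos (by linarith [Real.pi_gt_three])
        positivity
      intro hcon
      rcases mul_eq_zero.mp hcon with h' | h'
      · rcases mul_eq_zero.mp h' with h'' | h''
        · exact hsin (by linarith [neg_eq_zero.mp h''])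
        · exact hs h''
      · exact hs h'
    · refine ⟨fun x => Real.sinh (s*x), fun x => Real.cosh (s*x) * s,
        fun x => Real.sinh (s*x) * s * s, ⟨0, 1, 0, by funext x; ring⟩,
        fun x => (hlin x).sinh, fun x => ((hlin x).cosh).mul_const s, by simp, by simp, by simp, ?_⟩
      have h1 : s * (1/s) = 1 := by field_simp
      show Real.sinh (s * (1/s)) * s * s ≠ 0
      rw [h1]
      have hsinh : Real.sinh 1 ≠ 0 := ne_of_gt (by positivity)
      intro hcon
      rcases mul_eq_zero.mp hcon with h' | h'
      · rcases mul_eq_zero.mp h' with h'' | h''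
        · exact hsinh h''
        · exact hs h''
      · exact hs h'
  -- densL computations for X
  have hg : ∀ l : ℝ, densL l X (fun _ => 1) = fun t => l * d1 t := by
    intro l; funext t; simp [densL, (h1 t).deriv]
  have hgid : ∀ l : ℝ, densL l X (fun x => x) = fun t => X t + l * (d1 t * t) := by
    intro l; funext t; simp [densL, (h1 t).deriv]; ring
  -- E00: the (phi psi) coefficient equation
  have E00 : ∀ x, μ * d1 x * c00 x =
      c00 x * (γ * d1 x) + c10 x * (γ * d2 x) + (c00 x * (lam * d1 x) + c01 x * (lam * d2 x)) := by
    intro x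
    have key := hinv X hXK (fun _ => (1:ℝ)) (fun _ => (1:ℝ)) contDiff_const contDiff_const x
    rw [hA11, hg, hg, hA, hA] at key
    simp [densL, hdc00 x, (h1 x).deriv, ((h2 x).const_mul γ).deriv,
      ((h2 x).const_mul lam).deriv] at key
    linear_combination key
  -- E10
  have E10 : (μ - (γ + lam + 1)) * c10 0 = 0 := by
    have key := hinv X hXK (fun x => x) (fun _ => (1:ℝ)) contDiff_id contDiff_const 0
    rw [hAid1, hgid, hg, hA, hA] at key
    have hd : HasDerivAt (fun t => X t + γ * (d1 t * t))
        (d1 0 + γ * (d2 0 * 0 + d1 0 * 1)) 0 :=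
      (h1 0).add (((h2 0).mul (hasDerivAt_id 0)).const_mul γ)
    simp [densL, hX0, hd.deriv, hd20, hd10, (h1 0).deriv] at key
    have hkey : ((μ - (γ + lam + 1)) * c10 0) * s = 0 := by linear_combination key
    rcases mul_eq_zero.mp hkey with h | h
    · exact h
    · exact absurd h hs
  -- E01
  have E01 : (μ - (γ + lam + 1)) * c01 0 = 0 := by
    have key := hinv X hXK (fun _ => (1:ℝ)) (fun x => x) contDiff_const contDiff_id 0
    rw [hA1id, hg, hgid, hA, hA] at key
    have hd : HasDerivAt (fun t => X t + lam * (d1 t * t))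
        (d1 0 + lam * (d2 0 * 0 + d1 0 * 1)) 0 :=
      (h1 0).add (((h2 0).mul (hasDerivAt_id 0)).const_mul lam)
    simp [densL, hX0, hd.deriv, hd20, hd10, ((h2 0).const_mul γ).deriv, (h1 0).deriv] at key
    have hkey : ((μ - (γ + lam + 1)) * c01 0) * s = 0 := by linear_combination key
    rcases mul_eq_zero.mp hkey with h | h
    · exact h
    · exact absurd h hs
  -- nonzero first order part at 0
  have hb : c10 0 ≠ 0 ∨ c01 0 ≠ 0 := by
    obtain ⟨x₁, hx1⟩ := hfirst
    rcases hx1 with h | h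
    · left; intro h0; exact h (by rw [hc10c x₁, h0])
    · right; intro h0; exact h (by rw [hc01c x₁, h0])
  have hmu : μ = γ + lam + 1 := by
    rcases hb with h | h
    · have := mul_eq_zero.mp E10
      rcases this with h' | h'
      · linarith [sub_eq_zero.mp (by linarith : μ - (γ + lam + 1) = 0)]
      · exact absurd h' h
    · rcases mul_eq_zero.mp E01 with h' | h'
      · linarith
      · exact absurd h' h
  -- c00 = 0
  have hc000 : c00 0 = 0 := by
    have h := E00 0
    rw [hd10, hd20, hmu] at h
    have h' : s * c00 0 = 0 := by linear_combination h
    rcases mul_eq_zero.mp h' with h'' | h''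
    · exact absurd h'' hs
    · exact h''
  have hc00all : ∀ x, c00 x = 0 := fun x => by rw [hc00c x, hc000]
  -- the zeroth-order relation
  have hrel : γ * c10 0 + lam * c01 0 = 0 := by
    have h := E00 (1/s)
    rw [hc00all (1/s), hc10c (1/s), hc01c (1/s)] at h
    have h' : (γ * c10 0 + lam * c01 0) * d2 (1/s) = 0 := by linear_combination -h
    rcases mul_eq_zero.mp h' with h'' | h''
    · exact h''
    · exact absurd h'' hd2
  refine ⟨hmu, hc00all, ?_⟩
  by_cases hlam : lam = 0
  · have hγ : γ ≠ 0 := fun h => hγlam ⟨h, hlam⟩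
    have hb1 : c10 0 = 0 := by
      have h' : γ * c10 0 = 0 := by rw [hlam] at hrel; linarith
      rcases mul_eq_zero.mp h' with h'' | h''
      · exact absurd h'' hγ
      · exact h''
    have hb2 : c01 0 ≠ 0 := by
      rcases hb with h | h
      · exact absurd hb1 h
      · exact h
    refine ⟨c01 0 / γ, div_ne_zero hb2 hγ, fun x => ⟨?_, ?_⟩⟩
    · rw [hc10c x, hb1, hlam]; ring
    · rw [hc01c x]; field_simp
  · have hb1 : c10 0 ≠ 0 := by
      intro h0
      have h' : lam * c01 0 = 0 := by rw [h0] at hrel; linarith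
      have hb2 : c01 0 = 0 := by
        rcases mul_eq_zero.mp h' with h'' | h''
        · exact absurd h'' hlam
        · exact h''
      rcases hb with h | h
      · exact h h0
      · exact h hb2
    refine ⟨-(c10 0) / lam, ?_, fun x => ⟨?_, ?_⟩⟩
    · intro h0
      rw [div_eq_zero_iff] at h0
      rcases h0 with h0 | h0
      · exact hb1 (neg_eq_zero.mp h0)
      · exact hlam h0
    · rw [hc10c x]; field_simp
    · rw [hc01c x]
      field_simp
      linear_combination hrel
end

section
/- Model the circle S¹ by 2π-periodic smooth functions: Vect(S¹) is the space of 2π-periodic X ∈ C^∞(ℝ) with bracket [X,Y] = XY' − X'Y, and F_λ(S¹) is the space of 2π-periodic smooth functions with action L_X^λ φ = Xφ' + λX'φ. Fix λ ∈ ℝ and set μ = λ. Then: (a) the maps c₁(X)(φ) = X'·φ and c₂(X)(φ) = X·φ are 1-cocycles on Vect(S¹) with values in Hom(F_λ, F_λ); and (b) none of c₁, c₂, c₁ − c₂ is a coboundary, i.e. for no differential operator A(φ) = Σ_{j≤k} a_j φ^{(j)} with 2π-periodic smooth coefficients does the corresponding cocycle equal X ↦ L_X^λ ∘ A − A ∘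 L_X^λ. -/
open Real

/-- The Lie bracket of vector fields: `[X,Y] = XY' − X'Y`. -/
noncomputable def vbra (X Y : ℝ → ℝ) : ℝ → ℝ :=
  fun x => X x * deriv Y x - deriv X x * Y x

/-- Vector fields on the circle / densities on the circle: smooth 2π-periodic functions. -/
def SmoothCirc (f : ℝ → ℝ) : Prop :=
  ContDiff ℝ (⊤ : ℕ∞) f ∧ Function.Periodic f (2 * Real.pi)

/-- The 1-cocycle identity on Vect(S¹) with values in Hom(F_λ, F_λ). -/
def IsCocycleCirc (lam : ℝ) (c : (ℝ → ℝ) → (ℝ → ℝ) → ℝ → ℝ) : Prop :=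
  ∀ X Y : ℝ → ℝ, SmoothCirc X → SmoothCirc Y →
    ∀ φ : ℝ → ℝ, SmoothCirc φ → ∀ x : ℝ,
    c (vbra X Y) φ x =
      (densL lam X (c Y φ) x - c Y (densL lam X φ) x)
        - (densL lam Y (c X φ) x - c X (densL lam Y φ) x)

/-- `c` is the coboundary of a differential operator `A(φ) = Σ_{j≤k} a_j φ^{(j)}` with
smooth 2π-periodic coefficients: `c(X) = L_X^λ ∘ A − A ∘ L_X^λ`. -/
def IsCoboundaryCirc (lam : ℝ) (c : (ℝ → ℝ) → (ℝ → ℝ) → ℝ → ℝ) : Prop :=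
  ∃ k : ℕ, ∃ a : ℕ → ℝ → ℝ, (∀ j, SmoothCirc (a j)) ∧
    ∀ X : ℝ → ℝ, SmoothCirc X → ∀ φ : ℝ → ℝ, SmoothCirc φ → ∀ x : ℝ,
      c X φ x =
        densL lam X (fun y => ∑ j ∈ Finset.range (k + 1), a j y * iteratedDeriv j φ y) x
          - ∑ j ∈ Finset.range (k + 1), a j x * iteratedDeriv j (densL lam X φ) x

/- ### Auxiliary lemmas -/

private lemma smooth_bits {f : ℝ → ℝ} (hf : ContDiff ℝ (⊤ : ℕ∞) f) :
    Differentiable ℝ f ∧ Differentiable ℝ (deriv f) := by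
  have h1 := contDiff_infty_iff_deriv.mp (hf.of_le (by simp))
  exact ⟨h1.1, (contDiff_infty_iff_deriv.mp h1.2).1⟩

private lemma smSin (n : ℕ) : SmoothCirc (fun x => Real.sin ((n:ℝ) * x)) := by
  constructor
  · exact Real.contDiff_sin.comp
      (contDiff_const.mul contDiff_id : ContDiff ℝ (⊤ : ℕ∞) fun x : ℝ => (n:ℝ) * x)
  · intro x
    show Real.sin ((n:ℝ) * (x + 2 * Real.pi)) = _
    have h : (n:ℝ) * (x + 2 * Real.pi) = (n:ℝ) * x + (n:ℝ) * (2 * Real.pi) := by ring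
    rw [h, Real.sin_add_nat_mul_two_pi]

private lemma smOne : SmoothCirc (fun _ : ℝ => (1:ℝ)) := ⟨contDiff_const, fun _ => rfl⟩

private lemma itd_zero_fun : ∀ m : ℕ, iteratedDeriv m (fun _ : ℝ => (0:ℝ)) = fun _ => 0
  | 0 => iteratedDeriv_zero
  | (m+1) => by rw [iteratedDeriv_succ, itd_zero_fun m]; funext x; simp

private lemma itd_one_fun (m : ℕ) : iteratedDeriv (m+1) (fun _ : ℝ => (1:ℝ)) = fun _ => 0 := by
  rw [iteratedDeriv_succ']
  have h : deriv (fun _ : ℝ => (1:ℝ)) = fun _ => (0:ℝ) := by funext x; simp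
  rw [h, itd_zero_fun]

/-- The operator `A` applied to the constant function 1 is just `a 0`. -/
private lemma sumA (k : ℕ) (a : ℕ → ℝ → ℝ) :
    (fun y => ∑ j ∈ Finset.range (k+1), a j y * iteratedDeriv j (fun _ : ℝ => (1:ℝ)) y)
      = a 0 := by
  funext y
  rw [Finset.sum_eq_single 0]
  · simp [iteratedDeriv_zero]
  · intro j _ hj
    obtain ⟨m, rfl⟩ := Nat.exists_eq_succ_of_ne_zero hj
    rw [itd_one_fun]
    simp
  · intro h; exact absurd (Finset.mem_range.mpr (Nat.succ_pos k)) h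

private lemma densL_one_one (lam : ℝ) :
    densL lam (fun _ => 1) (fun _ : ℝ => (1:ℝ)) = fun _ => 0 := by
  funext y; simp [densL]

/-- Value of the coboundary of `A` on `X = 1`, `φ = 1`. -/
private lemma cob_one_one (lam : ℝ) (k : ℕ) (a : ℕ → ℝ → ℝ) (x : ℝ) :
    densL lam (fun _ => 1)
        (fun y => ∑ j ∈ Finset.range (k+1), a j y * iteratedDeriv j (fun _ : ℝ => (1:ℝ)) y) x
      - ∑ j ∈ Finset.range (k+1), a j x * iteratedDeriv j (densL lam (fun _ => 1) (fun _ => 1)) x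
    = deriv (a 0) x := by
  rw [sumA, densL_one_one]
  simp [densL, itd_zero_fun]

/-- A smooth periodic function cannot have constant nonzero derivative. -/
private lemma no_periodic_deriv_const (f : ℝ → ℝ) (hf : SmoothCirc f) (c : ℝ) (hc : c ≠ 0)
    (h : ∀ x, deriv f x = c) : False := by
  have hdiff : Differentiable ℝ f := hf.1.differentiable (by simp)
  have hg : Differentiable ℝ (fun x => f x - c * x) :=
    hdiff.sub ((differentiable_id.const_mul c (𝕜 := ℝ)))
  have hg' : ∀ x, deriv (fun x => f x - c * x) x = 0 := by
    intro x
    have hcm : DifferentiableAt ℝ (fun x : ℝ => c * x) x :=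
      (differentiableAt_id.const_mul c)
    rw [deriv_fun_sub (hdiff x) hcm, h, deriv_const_mul _ differentiableAt_id]
    simp
  have hconst := is_const_of_deriv_eq_zero hg hg' (0 + 2 * Real.pi) 0
  have hper := hf.2 0
  rw [hper] at hconst
  have hpi := Real.pi_pos
  rcases lt_or_gt_of_ne hc with h' | h' <;> nlinarith

private lemma derivCsin15 (c n b : ℝ) :
    deriv (fun x => c * Real.sin (n * x + b)) = fun x => c * n * Real.sin (n * x + b + π/2) := by
  funext x
  have h1 : HasDerivAt (fun x : ℝ => n * x + b) n x := by
    simpa using ((hasDerivAt_id x).const_mul n).add_const b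
  have h : HasDerivAt (fun x => c * Real.sin (n * x + b)) (c * (Real.cos (n*x+b) * n)) x :=
    h1.sin.const_mul c
  rw [h.deriv, Real.sin_add_pi_div_two]; ring

private lemma itd_csin (c n b : ℝ) : ∀ m : ℕ,
    iteratedDeriv m (fun x => c * Real.sin (n * x + b)) =
      fun x => c * n ^ m * Real.sin (n * x + b + m * (π/2))
  | 0 => by funext x; simp
  | (m+1) => by
    rw [iteratedDeriv_succ, itd_csin c n b m]
    have h2 : (fun x => c * n^m * Real.sin (n*x + b + m*(π/2)))
        = fun x => (c * n^m) * Real.sin (n*x + (b + m*(π/2))) := by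
      funext x; rw [add_assoc]
    rw [h2, derivCsin15 (c * n^m) n (b + m*(π/2))]
    funext x
    push_cast
    ring_nf

/-- Extracting, from the coboundary identity for `c₁`, a polynomial identity at
`X = sin(n·)`, `φ = 1`, `x = 0`. -/
private lemma c1_eq (lam : ℝ) (k : ℕ) (a : ℕ → ℝ → ℝ)
    (heq : ∀ X : ℝ → ℝ, SmoothCirc X → ∀ φ : ℝ → ℝ, SmoothCirc φ → ∀ x : ℝ,
      deriv X x * φ x =
        densL lam X (fun y => ∑ j ∈ Finset.range (k + 1), a j y * iteratedDeriv j φ y) x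
          - ∑ j ∈ Finset.range (k + 1), a j x * iteratedDeriv j (densL lam X φ) x)
    (n : ℕ) :
    (n:ℝ) = lam * a 0 0 * n
      - ∑ j ∈ Finset.range (k+1),
          (lam * a j 0 * Real.sin (π/2 + j*(π/2))) * (n:ℝ)^(j+1) := by
  set X : ℝ → ℝ := fun x => Real.sin ((n:ℝ) * x) with hXdef
  have hX1 : X = fun x => 1 * Real.sin ((n:ℝ)*x + 0) := by
    funext x; rw [one_mul, add_zero]
  have hd : deriv X = fun x => 1 * (n:ℝ) * Real.sin ((n:ℝ)*x + 0 + π/2) := by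
    rw [hX1]; exact derivCsin15 1 n 0
  have hder0 : deriv X 0 = (n:ℝ) := by
    rw [hd]; simp [Real.sin_pi_div_two]
  have hX0 : X 0 = 0 := by simp [hXdef]
  have hdl : densL lam X (fun _ => 1) = fun y => (lam * (n:ℝ)) * Real.sin ((n:ℝ)*y + π/2) := by
    funext y
    simp only [densL, hd, deriv_const']
    ring_nf
  have hitd : ∀ j : ℕ, iteratedDeriv j (densL lam X (fun _ => 1)) 0
      = lam * (n:ℝ) * (n:ℝ)^j * Real.sin (π/2 + j*(π/2)) := by
    intro j
    rw [hdl, itd_csin (lam*n) n (π/2) j]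
    norm_num
  have H := heq X (smSin n) (fun _ => 1) smOne 0
  rw [sumA] at H
  simp only [densL, hX0, hder0, mul_one, zero_mul, zero_add] at H
  have hs : ∑ j ∈ Finset.range (k+1),
        (lam * a j 0 * Real.sin (π/2 + j*(π/2))) * (n:ℝ)^(j+1)
      = ∑ j ∈ Finset.range (k+1), a j 0 * iteratedDeriv j (densL lam X (fun _ => 1)) 0 :=
    Finset.sum_congr rfl (fun j _ => by rw [hitd j]; ring)
  rw [hs]
  linarith [H]

/-- A polynomial relation `n = λ a₀₀ n − Σ bⱼ n^{j+1}` for all naturals, with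
`b₀ = λ a₀₀`, is impossible. -/
private lemma no_poly (lam : ℝ) (k : ℕ) (b : ℕ → ℝ) (a00 : ℝ)
    (key : ∀ n : ℕ, (n:ℝ) = lam * a00 * n - ∑ j ∈ Finset.range (k+1), b j * (n:ℝ)^(j+1))
    (hb0 : b 0 = lam * a00) : False := by
  set p : Polynomial ℝ :=
    Polynomial.C (lam * a00 - 1) * Polynomial.X
      - ∑ j ∈ Finset.range (k+1), Polynomial.C (b j) * Polynomial.X^(j+1) with hp
  have hroot : ∀ n : ℕ, p.IsRoot (n:ℝ) := by
    intro n
    simp only [Polynomial.IsRoot, hp, Polynomial.eval_sub, Polynomial.eval_mul,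
      Polynomial.eval_C, Polynomial.eval_X, Polynomial.eval_finset_sum, Polynomial.eval_pow]
    linear_combination - key n
  have hp0 : p = 0 :=
    p.eq_zero_of_infinite_isRoot (Set.infinite_of_injective_forall_mem Nat.cast_injective hroot)
  have hc := congrArg (fun q => Polynomial.coeff q 1) hp0
  simp only [hp, Polynomial.coeff_sub, Polynomial.coeff_zero, Polynomial.coeff_C_mul,
    Polynomial.coeff_X_one, Polynomial.finset_sum_coeff, Polynomial.coeff_X_pow] at hc
  rw [Finset.sum_eq_single 0 (fun j _ hj => by rw [if_neg (by omega)]; ring)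
    (fun h => absurd (Finset.mem_range.mpr (Nat.succ_pos k)) h)] at hc
  rw [if_pos rfl, hb0] at hc
  linarith

/-- On the circle, for `μ = λ`, the maps `c₁(X)(φ) = X'φ` and `c₂(X)(φ) = Xφ` are
1-cocycles on Vect(S¹) with values in Hom(F_λ, F_λ), and none of `c₁`, `c₂`, `c₁ − c₂`
is a coboundary (they are nontrivial and not cohomologous to each other). -/
theorem stmt15 (lam : ℝ) :
    IsCocycleCirc lam (fun X φ x => deriv X x * φ x) ∧
    IsCocycleCirc lam (fun X φ x => X x * φ x) ∧
    ¬ IsCoboundaryCirc lam (fun X φ x => deriv X x * φ x) ∧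
    ¬ IsCoboundaryCirc lam (fun X φ x => X x * φ x) ∧
    ¬ IsCoboundaryCirc lam (fun X φ x => deriv X x * φ x - X x * φ x) := by
  refine ⟨?_, ?_, ?_, ?_, ?_⟩
  · -- c₁ is a cocycle
    intro X Y hX hY φ hφ x
    obtain ⟨hXd, hXd2⟩ := smooth_bits hX.1
    obtain ⟨hYd, hYd2⟩ := smooth_bits hY.1
    obtain ⟨hpd, hpd2⟩ := smooth_bits hφ.1
    show deriv (vbra X Y) x * φ x =
      (densL lam X (fun x => deriv Y x * φ x) x - deriv Y x * densL lam X φ x)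
        - (densL lam Y (fun x => deriv X x * φ x) x - deriv X x * densL lam Y φ x)
    have h1 : deriv (vbra X Y) x =
        (deriv X x * deriv Y x + X x * deriv (deriv Y) x)
          - (deriv (deriv X) x * Y x + deriv X x * deriv Y x) := by
      unfold vbra
      rw [deriv_fun_sub (f := fun y => X y * deriv Y y) (g := fun y => deriv X y * Y y)
        ((hXd x).mul (hYd2 x)) ((hXd2 x).mul (hYd x)),
        deriv_fun_mul (hXd x) (hYd2 x), deriv_fun_mul (hXd2 x) (hYd x)]
    have h2 : deriv (fun y => deriv Y y * φ y) x
        = deriv (deriv Y) x * φ x + deriv Y x * deriv φ x := deriv_fun_mul (hYd2 x) (hpd x)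
    have h3 : deriv (fun y => deriv X y * φ y) x
        = deriv (deriv X) x * φ x + deriv X x * deriv φ x := deriv_fun_mul (hXd2 x) (hpd x)
    simp only [densL]
    rw [h1, h2, h3]
    ring
  · -- c₂ is a cocycle
    intro X Y hX hY φ hφ x
    obtain ⟨hXd, hXd2⟩ := smooth_bits hX.1
    obtain ⟨hYd, hYd2⟩ := smooth_bits hY.1
    obtain ⟨hpd, hpd2⟩ := smooth_bits hφ.1
    show vbra X Y x * φ x =
      (densL lam X (fun x => Y x * φ x) x - Y x * densL lam X φ x)
        - (densL lam Y (fun x => X x * φ x) x - X x * densL lam Y φ x)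
    have h2 : deriv (fun y => Y y * φ y) x = deriv Y x * φ x + Y x * deriv φ x :=
      deriv_fun_mul (hYd x) (hpd x)
    have h3 : deriv (fun y => X y * φ y) x = deriv X x * φ x + X x * deriv φ x :=
      deriv_fun_mul (hXd x) (hpd x)
    simp only [densL, vbra]
    rw [h2, h3]
    ring
  · -- c₁ is not a coboundary
    rintro ⟨k, a, ha, heq⟩
    exact no_poly lam k (fun j => lam * a j 0 * Real.sin (π/2 + j*(π/2))) (a 0 0)
      (c1_eq lam k a (fun X hX φ hφ x => heq X hX φ hφ x))
      (by norm_num [Real.sin_pi_div_two])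
  · -- c₂ is not a coboundary
    rintro ⟨k, a, ha, heq⟩
    have h1 : ∀ x, deriv (a 0) x = 1 := by
      intro x
      have H := heq (fun _ => 1) smOne (fun _ => 1) smOne x
      rw [cob_one_one] at H
      simpa using H.symm
    exact no_periodic_deriv_const (a 0) (ha 0) 1 one_ne_zero h1
  · -- c₁ − c₂ is not a coboundary
    rintro ⟨k, a, ha, heq⟩
    have h1 : ∀ x, deriv (a 0) x = -1 := by
      intro x
      have H := heq (fun _ => 1) smOne (fun _ => 1) smOne x
      rw [cob_one_one] at H
      simpa using H.symm
    exact no_periodic_deriv_const (a 0) (ha 0) (-1) (by norm_num) h1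
end

section
/- Let λ ∈ ℝ, δ ∈ ℝ with δ ≠ 1, and μ = λ + δ. The map Q : F_{δ−1} → D¹_{λ,μ} defined by Q(a₁)(ψ) = a₁ψ' + (λ/(1−δ))·a₁'·ψ is Vect(ℝ)-equivariant: for every X ∈ Vect(ℝ) and every smooth a₁, one has Q(L_X^{δ−1} a₁) = L_X^μ ∘ Q(a₁) − Q(a₁) ∘ L_X^λ. -/
/-- Derivative of `x ↦ f x * deriv g x + l * deriv f' x * g x` style expressions. -/
lemma densL_deriv (l : ℝ) (X φ : ℝ → ℝ) (hX : ContDiff ℝ (⊤ : ℕ∞) X) (hφ : ContDiff ℝ (⊤ : ℕ∞) φ) (x : ℝ) :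
    deriv (densL l X φ) x =
      deriv X x * deriv φ x + X x * deriv (deriv φ) x +
        (l * deriv (deriv X) x * φ x + l * deriv X x * deriv φ x) := by
  have hX2 : ContDiff ℝ (↑(⊤ : ℕ∞)) X := hX.of_le (by simp)
  have hφ2 : ContDiff ℝ (↑(⊤ : ℕ∞)) φ := hφ.of_le (by simp)
  have dX : Differentiable ℝ X := hX.differentiable (by simp)
  have dX' : Differentiable ℝ (deriv X) :=
    (hX2.iterate_deriv 1).differentiable (by simp)
  have dφ : Differentiable ℝ φ := hφ.differentiable (by simp)
  have dφ' : Differentiable ℝ (deriv φ) :=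
    (hφ2.iterate_deriv 1).differentiable (by simp)
  have h : HasDerivAt (densL l X φ)
      (deriv X x * deriv φ x + X x * deriv (deriv φ) x +
        ((l * deriv (deriv X) x) * φ x + (l * deriv X x) * deriv φ x)) x := by
    exact ((dX x).hasDerivAt.mul (dφ' x).hasDerivAt).add
      ((((dX' x).hasDerivAt.const_mul l).mul (dφ x).hasDerivAt))
  rw [h.deriv]

/-- For `δ ≠ 1` and `μ = λ + δ`, the quantization map
`Q(a₁)(ψ) = a₁ψ' + (λ/(1−δ)) a₁' ψ : F_{δ−1} → D¹_{λ,μ}` is Vect(ℝ)-equivariant: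
`Q(L_X^{δ−1} a₁) = L_X^μ ∘ Q(a₁) − Q(a₁) ∘ L_X^λ`. -/
theorem stmt16 (lam δ μ : ℝ) (hδ : δ ≠ 1) (hμ : μ = lam + δ)
    (Q : (ℝ → ℝ) → (ℝ → ℝ) → ℝ → ℝ)
    (hQ : ∀ a₁ ψ : ℝ → ℝ, ∀ x : ℝ,
      Q a₁ ψ x = a₁ x * deriv ψ x + (lam / (1 - δ)) * deriv a₁ x * ψ x) :
    ∀ X : ℝ → ℝ, ContDiff ℝ (⊤ : ℕ∞) X → ∀ a₁ : ℝ → ℝ, ContDiff ℝ (⊤ : ℕ∞) a₁ →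
      ∀ ψ : ℝ → ℝ, ContDiff ℝ (⊤ : ℕ∞) ψ → ∀ x : ℝ,
      Q (densL (δ - 1) X a₁) ψ x =
        densL μ X (Q a₁ ψ) x - Q a₁ (densL lam X ψ) x := by
  intro X hX a₁ ha₁ ψ hψ x
  set c : ℝ := lam / (1 - δ) with hc
  have hQa : Q a₁ ψ = fun x => a₁ x * deriv ψ x + c * deriv a₁ x * ψ x :=
    funext (hQ a₁ ψ)
  have ha2 : ContDiff ℝ (↑(⊤ : ℕ∞)) a₁ := ha₁.of_le (by simp)
  have hψ2 : ContDiff ℝ (↑(⊤ : ℕ∞)) ψ := hψ.of_le (by simp)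
  have da : Differentiable ℝ a₁ := ha₁.differentiable (by simp)
  have da' : Differentiable ℝ (deriv a₁) :=
    (ha2.iterate_deriv 1).differentiable (by simp)
  have dψ : Differentiable ℝ ψ := hψ.differentiable (by simp)
  have dψ' : Differentiable ℝ (deriv ψ) :=
    (hψ2.iterate_deriv 1).differentiable (by simp)
  -- derivative of Q a₁ ψ
  have hQd : deriv (Q a₁ ψ) x =
      deriv a₁ x * deriv ψ x + a₁ x * deriv (deriv ψ) x +
        (c * deriv (deriv a₁) x * ψ x + c * deriv a₁ x * deriv ψ x) := by
    rw [hQa]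
    have h : HasDerivAt (fun x => a₁ x * deriv ψ x + c * deriv a₁ x * ψ x)
        (deriv a₁ x * deriv ψ x + a₁ x * deriv (deriv ψ) x +
          ((c * deriv (deriv a₁) x) * ψ x + (c * deriv a₁ x) * deriv ψ x)) x := by
      exact ((da x).hasDerivAt.mul (dψ' x).hasDerivAt).add
        (((da' x).hasDerivAt.const_mul c).mul (dψ x).hasDerivAt)
    rw [h.deriv]
  have hψd := densL_deriv lam X ψ hX hψ x
  have had := densL_deriv (δ - 1) X a₁ hX ha₁ x
  have h1δ : (1 : ℝ) - δ ≠ 0 := by intro h; apply hδ; linarith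
  have hc1 : c * (δ - 1) = -lam := by
    rw [hc]; field_simp; ring
  rw [hQ (densL (δ - 1) X a₁) ψ x, hQ a₁ (densL lam X ψ) x, had, hψd]
  simp only [densL]
  rw [hQd, hQ a₁ ψ x, hμ]
  linear_combination deriv (deriv X) x * a₁ x * ψ x * hc1
end

section
/- Let λ ∈ ℝ, δ ∈ ℝ with δ ≠ 2 and δ ≠ 3/2, and μ = λ + δ. The map Q : F_{δ−2} → D²_{λ,μ} defined by Q(a₂)(ψ) = a₂ψ'' + ((1+2λ)/(2−δ))·a₂'·ψ' + (λ(1+2λ)/((2−δ)(3−2δ)))·a₂''·ψ is equivariant with respect to the projective subalgebra 𝔩₀ = span{1, x, x²} ⊂ Vect(ℝ): for every X ∈ 𝔩₀ and every smooth a₂, one has Q(L_X^{δ−2} a₂) = L_X^μ ∘ Q(a₂) − Q(a₂) ∘ L_X^λ. -/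
/-- The projective subalgebra 𝔩₀ ⊂ Vect(ℝ): the span of `1`, `x`, `x²`. -/
def l0 : Set (ℝ → ℝ) :=
  {X | ∃ a b c : ℝ, X = fun x => a + b * x + c * x ^ 2}

/- Auxiliary lemmas -/

lemma hasDerivAt_poly (A B C y : ℝ) :
    HasDerivAt (fun y : ℝ => A + B * y + C * y ^ 2) (B + 2 * C * y) y := by
  have h := (((hasDerivAt_id y).const_mul B).const_add A).add
    ((hasDerivAt_pow 2 y).const_mul C)
  exact h.congr_deriv (by norm_num; ring)

lemma hasDerivAt_poly1 (B C y : ℝ) :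
    HasDerivAt (fun y : ℝ => B + 2 * C * y) (2 * C) y := by
  have h := ((hasDerivAt_id y).const_mul (2 * C)).const_add B
  simpa using h

lemma polyderiv (A B C : ℝ) :
    deriv (fun y : ℝ => A + B * y + C * y ^ 2) = fun y => B + 2 * C * y := by
  funext y
  exact (hasDerivAt_poly A B C y).deriv

lemma densL_poly (l A B C : ℝ) (φ : ℝ → ℝ) :
    densL l (fun y => A + B * y + C * y ^ 2) φ =
      fun y => (A + B * y + C * y ^ 2) * deriv φ y + l * (B + 2 * C * y) * φ y := by
  funext y
  simp [densL, polyderiv]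

lemma deriv_densL_poly (l A B C : ℝ) (φ : ℝ → ℝ) (h1 : Differentiable ℝ φ)
    (h2 : Differentiable ℝ (deriv φ)) :
    deriv (densL l (fun y => A + B * y + C * y ^ 2) φ) =
      fun y => (A + B * y + C * y ^ 2) * deriv (deriv φ) y + (B + 2 * C * y) * deriv φ y
        + l * (2 * C) * φ y + l * (B + 2 * C * y) * deriv φ y := by
  funext y
  rw [densL_poly]
  have h := ((hasDerivAt_poly A B C y).mul (h2 y).hasDerivAt).add
    (((hasDerivAt_poly1 B C y).const_mul l).mul (h1 y).hasDerivAt)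
  exact h.deriv.trans (by ring)

lemma deriv2_densL_poly (l A B C : ℝ) (φ : ℝ → ℝ) (h1 : Differentiable ℝ φ)
    (h2 : Differentiable ℝ (deriv φ)) (h3 : Differentiable ℝ (deriv (deriv φ))) (x : ℝ) :
    deriv (deriv (densL l (fun y => A + B * y + C * y ^ 2) φ)) x =
      (A + B * x + C * x ^ 2) * deriv (deriv (deriv φ)) x
        + 2 * (B + 2 * C * x) * deriv (deriv φ) x + 2 * C * deriv φ x
        + l * (4 * C * deriv φ x + (B + 2 * C * x) * deriv (deriv φ) x) := by
  rw [deriv_densL_poly l A B C φ h1 h2]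
  have h := ((((hasDerivAt_poly A B C x).mul (h3 x).hasDerivAt).add
      ((hasDerivAt_poly1 B C x).mul (h2 x).hasDerivAt)).add
      (((h1 x).hasDerivAt).const_mul (l * (2 * C)))).add
      (((hasDerivAt_poly1 B C x).const_mul l).mul (h2 x).hasDerivAt)
  exact h.deriv.trans (by ring)

lemma iteratedDeriv_two (f : ℝ → ℝ) : iteratedDeriv 2 f = deriv (deriv f) := by
  rw [show (2 : ℕ) = 1 + 1 from rfl, iteratedDeriv_succ, iteratedDeriv_one]

/-- For `δ ≠ 2`, `δ ≠ 3/2` and `μ = λ + δ`, the quantization map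
`Q(a₂)(ψ) = a₂ψ'' + ((1+2λ)/(2−δ)) a₂' ψ' + (λ(1+2λ)/((2−δ)(3−2δ))) a₂'' ψ`
from `F_{δ−2}` to `D²_{λ,μ}` is equivariant with respect to 𝔩₀:
`Q(L_X^{δ−2} a₂) = L_X^μ ∘ Q(a₂) − Q(a₂) ∘ L_X^λ` for all `X ∈ 𝔩₀`. -/
theorem stmt17 (lam δ μ : ℝ) (hδ2 : δ ≠ 2) (hδ3 : δ ≠ 3 / 2) (hμ : μ = lam + δ)
    (Q : (ℝ → ℝ) → (ℝ → ℝ) → ℝ → ℝ)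
    (hQ : ∀ a₂ ψ : ℝ → ℝ, ∀ x : ℝ,
      Q a₂ ψ x = a₂ x * iteratedDeriv 2 ψ x
        + ((1 + 2 * lam) / (2 - δ)) * deriv a₂ x * deriv ψ x
        + ((lam * (1 + 2 * lam)) / ((2 - δ) * (3 - 2 * δ))) * iteratedDeriv 2 a₂ x * ψ x) :
    ∀ X ∈ l0, ∀ a₂ : ℝ → ℝ, ContDiff ℝ (⊤ : ℕ∞) a₂ →
      ∀ ψ : ℝ → ℝ, ContDiff ℝ (⊤ : ℕ∞) ψ → ∀ x : ℝ,
      Q (densL (δ - 2) X a₂) ψ x =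
        densL μ X (Q a₂ ψ) x - Q a₂ (densL lam X ψ) x := by
  intro X hX a ha ψ hψ x
  obtain ⟨A, B, C, rfl⟩ := hX
  have ha' : ContDiff ℝ ((⊤ : ℕ∞) : WithTop ℕ∞) a := ha.of_le (by simp)
  have hψ' : ContDiff ℝ ((⊤ : ℕ∞) : WithTop ℕ∞) ψ := hψ.of_le (by simp)
  have ha0 : Differentiable ℝ a := (contDiff_infty_iff_deriv.mp ha').1
  have ha1' : ContDiff ℝ ((⊤ : ℕ∞) : WithTop ℕ∞) (deriv a) := (contDiff_infty_iff_deriv.mp ha').2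
  have ha1 : Differentiable ℝ (deriv a) := (contDiff_infty_iff_deriv.mp ha1').1
  have ha2 : Differentiable ℝ (deriv (deriv a)) :=
    (contDiff_infty_iff_deriv.mp (contDiff_infty_iff_deriv.mp ha1').2).1
  have hp0 : Differentiable ℝ ψ := (contDiff_infty_iff_deriv.mp hψ').1
  have hp1' : ContDiff ℝ ((⊤ : ℕ∞) : WithTop ℕ∞) (deriv ψ) := (contDiff_infty_iff_deriv.mp hψ').2
  have hp1 : Differentiable ℝ (deriv ψ) := (contDiff_infty_iff_deriv.mp hp1').1
  have hp2 : Differentiable ℝ (deriv (deriv ψ)) :=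
    (contDiff_infty_iff_deriv.mp (contDiff_infty_iff_deriv.mp hp1').2).1
  set c1 : ℝ := (1 + 2 * lam) / (2 - δ) with hc1
  set c2 : ℝ := (lam * (1 + 2 * lam)) / ((2 - δ) * (3 - 2 * δ)) with hc2
  -- the quantization as an explicit function
  have hQf : Q a ψ = fun y => a y * deriv (deriv ψ) y + c1 * deriv a y * deriv ψ y
      + c2 * deriv (deriv a) y * ψ y := by
    funext y
    rw [hQ, iteratedDeriv_two, iteratedDeriv_two]
  -- derivative of the quantization
  have e5 : deriv (Q a ψ) x =
      deriv a x * deriv (deriv ψ) x + a x * deriv (deriv (deriv ψ)) x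
        + c1 * (deriv (deriv a) x * deriv ψ x + deriv a x * deriv (deriv ψ) x)
        + c2 * (deriv (deriv (deriv a)) x * ψ x + deriv (deriv a) x * deriv ψ x) := by
    rw [hQf]
    have h := (((ha0 x).hasDerivAt.mul (hp2 x).hasDerivAt).add
        ((((ha1 x).hasDerivAt.const_mul c1)).mul (hp1 x).hasDerivAt)).add
        ((((ha2 x).hasDerivAt.const_mul c2)).mul (hp0 x).hasDerivAt)
    exact h.deriv.trans (by ring)
  have e1 : deriv (deriv (densL lam (fun y => A + B * y + C * y ^ 2) ψ)) x =
      (A + B * x + C * x ^ 2) * deriv (deriv (deriv ψ)) x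
        + 2 * (B + 2 * C * x) * deriv (deriv ψ) x + 2 * C * deriv ψ x
        + lam * (4 * C * deriv ψ x + (B + 2 * C * x) * deriv (deriv ψ) x) :=
    deriv2_densL_poly lam A B C ψ hp0 hp1 hp2 x
  have e4 : deriv (deriv (densL (δ - 2) (fun y => A + B * y + C * y ^ 2) a)) x =
      (A + B * x + C * x ^ 2) * deriv (deriv (deriv a)) x
        + 2 * (B + 2 * C * x) * deriv (deriv a) x + 2 * C * deriv a x
        + (δ - 2) * (4 * C * deriv a x + (B + 2 * C * x) * deriv (deriv a) x) :=
    deriv2_densL_poly (δ - 2) A B C a ha0 ha1 ha2 x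
  rw [hQ (densL (δ - 2) (fun y => A + B * y + C * y ^ 2) a) ψ x,
    hQ a (densL lam (fun y => A + B * y + C * y ^ 2) ψ) x]
  simp only [iteratedDeriv_two]
  rw [e1, e4]
  simp only [deriv_densL_poly lam A B C ψ hp0 hp1,
    deriv_densL_poly (δ - 2) A B C a ha0 ha1, densL, polyderiv]
  rw [hQ a ψ x, e5]
  simp only [iteratedDeriv_two]
  subst hμ
  have h2 : (2 : ℝ) - δ ≠ 0 := sub_ne_zero.mpr (Ne.symm hδ2)
  have h3 : (3 : ℝ) - 2 * δ ≠ 0 := by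
    intro h; apply hδ3; linarith
  rw [hc1, hc2]
  have h3c : (3 : ℝ) - δ * 2 ≠ 0 := by rw [mul_comm]; exact h3
  field_simp
  ring
end
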